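/- Let q be a prime power and let T ⊂ PG(3,q) be the union of the two skew lines L₁ = {x₂=x₃=0} and L₂ = {x₀=x₁=0}. Then I₂(T) has dimension 4 with basis {X₀X₂, X₀X₃, X₁X₂, X₁X₃}, and V(I₂(T)) = T; that is, a pair of skew lines is a maximal rank-6 configuration. -/

import Mathlib

/-!
A quadratic form is `∑ cᵢⱼ XᵢXⱼ`. By homogeneity, vanishing at the points of the line
`x₂ = x₃ = 0` means vanishing on the whole plane `x₂ = x₃ = 0` of `F⁴`; evaluating at `e₀`, `e₁`
and `e₀ + e₁` then kills the coefficients of `X₀²`, `X₁²` and `X₀X₁`, and symmetrically for the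
other line. So `I₂(T)` is spanned by the four distinct monomials `XᵢXⱼ` with `i ∈ {0,1}`,
`j ∈ {2,3}`. A point off `T` has a nonzero coordinate among `x₀, x₁` and one among `x₂, x₃`, so one
of these monomials does not vanish there, whence `V(I₂(T)) = T`.
-/

open MvPolynomial

noncomputable section

/-- `PG3 F` is the projective space `PG(3, F)`. -/
abbrev PG3 (F : Type*) [Field F] := Projectivization F (Fin 4 → F)

/-- `I2 F S` is the space of quadratic forms in `X₀,…,X₃` vanishing on `S ⊆ PG(3,F)`. -/
def I2 (F : Type*) [Field F] (S : Set (PG3 F)) : Submodule F (MvPolynomial (Fin 4) F) :=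
  homogeneousSubmodule (Fin 4) F 2 ⊓
    ⨅ p ∈ S, LinearMap.ker ((aeval p.rep : MvPolynomial (Fin 4) F →ₐ[F] F).toLinearMap)

/-- the rank of a configuration `S ⊆ PG(3,F)`: `10 − dim I₂(S)`. -/
def rk (F : Type*) [Field F] (S : Set (PG3 F)) : ℕ :=
  10 - Module.finrank F (I2 F S)

/-- `Vz F I` is the common zero locus in `PG(3,F)` of the set `I` of polynomials. -/
def Vz (F : Type*) [Field F] (I : Set (MvPolynomial (Fin 4) F)) : Set (PG3 F) :=
  {p | ∀ f ∈ I, eval p.rep f = 0}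

namespace MvPolynomial

variable {σ R : Type*}

theorem IsHomogeneous.eval_smul [CommSemiring R] {f : MvPolynomial σ R} {n : ℕ}
    (hf : f.IsHomogeneous n) (c : R) (x : σ → R) :
    eval (c • x) f = c ^ n * eval x f := by
  rw [eval_eq, eval_eq, Finset.mul_sum]
  refine Finset.sum_congr rfl fun d hd => ?_
  simp_rw [Pi.smul_apply, smul_eq_mul, mul_pow, Finset.prod_mul_distrib,
    Finset.prod_pow_eq_pow_sum]
  rw [← hf (mem_support_iff.1 hd), Finsupp.weight_apply, Finsupp.sum]
  simp only [Pi.one_apply, smul_eq_mul, mul_one]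
  ring

theorem IsHomogeneous.exists_eq_sum_X_mul_X [CommSemiring R] [Fintype σ] {f : MvPolynomial σ R}
    (hf : f.IsHomogeneous 2) : ∃ c : σ → σ → R, f = ∑ i, ∑ j, c i j • (X i * X j) := by
  have hle : homogeneousSubmodule σ R 2 ≤
      Submodule.span R (Set.range fun p : σ × σ => X p.1 * X p.2) := by
    rw [← homogeneousSubmodule_one_pow, pow_two, homogeneousSubmodule_one_eq_span_X,
      Submodule.span_mul_span, Submodule.span_le]
    rintro _ ⟨_, ⟨i, rfl⟩, _, ⟨j, rfl⟩, rfl⟩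
    exact Submodule.subset_span ⟨(i, j), rfl⟩
  obtain ⟨c, hc⟩ := (Submodule.mem_span_range_iff_exists_fun R).1 (hle hf)
  exact ⟨fun i j => c (i, j), by rw [← hc, Fintype.sum_prod_type]⟩

theorem IsHomogeneous.eval_eq_zero_of_forall_rep [Field R] {f : MvPolynomial σ R} {n : ℕ}
    (hf : f.IsHomogeneous n) (hn : n ≠ 0) (s : Set σ)
    (h : ∀ p : Projectivization R (σ → R), (∀ i ∈ s, p.rep i = 0) → eval p.rep f = 0)
    {v : σ → R} (hv : ∀ i ∈ s, v i = 0) : eval v f = 0 := by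
  by_cases hv0 : v = 0
  · rw [hv0, ← smul_zero (0 : R), hf.eval_smul, zero_pow hn, zero_mul]
  obtain ⟨a, ha⟩ := Projectivization.exists_smul_eq_mk_rep R v hv0
  have hrep := h _ fun i hi => by rw [← ha, Pi.smul_apply, hv i hi, smul_zero]
  rwa [← ha, Units.smul_def, hf.eval_smul, mul_eq_zero, or_iff_right (pow_ne_zero _ a.ne_zero)]
    at hrep

end MvPolynomial

theorem mem_span_X_mul_X_of_eval_eq_zero {R : Type*} [CommRing R] {f : MvPolynomial (Fin 4) R}
    (hf : f.IsHomogeneous 2)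
    (h₁ : ∀ v : Fin 4 → R, v 2 = 0 → v 3 = 0 → eval v f = 0)
    (h₂ : ∀ v : Fin 4 → R, v 0 = 0 → v 1 = 0 → eval v f = 0) :
    f ∈ Submodule.span R {X 0 * X 2, X 0 * X 3, X 1 * X 2, X 1 * X 3} := by
  obtain ⟨c, rfl⟩ := hf.exists_eq_sum_X_mul_X
  have h00 := h₁ ![1, 0, 0, 0] rfl rfl
  have h11 := h₁ ![0, 1, 0, 0] rfl rfl
  have h01 := h₁ ![1, 1, 0, 0] rfl rfl
  have h22 := h₂ ![0, 0, 1, 0] rfl rfl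
  have h33 := h₂ ![0, 0, 0, 1] rfl rfl
  have h23 := h₂ ![0, 0, 1, 1] rfl rfl
  simp only [Fin.sum_univ_four, map_add, smul_eval, map_mul, eval_X, Matrix.cons_val_zero,
    Matrix.cons_val_one, Matrix.cons_val, mul_one, mul_zero, add_zero] at h00 h11 h01 h22 h33 h23
  have hc : ∑ i, ∑ j, c i j • (X i * X j : MvPolynomial (Fin 4) R) =
      (c 0 2 + c 2 0) • (X 0 * X 2) + (c 0 3 + c 3 0) • (X 0 * X 3) +
        (c 1 2 + c 2 1) • (X 1 * X 2) + (c 1 3 + c 3 1) • (X 1 * X 3) := by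
    simp only [Fin.sum_univ_four, mul_comm (X _ : MvPolynomial (Fin 4) R) (X _)]
    linear_combination (norm := module)
      h00 • (X 0 * X 0 : MvPolynomial (Fin 4) R) + h11 • (X 1 * X 1 : MvPolynomial (Fin 4) R) +
      (h01 - h00 - h11) • (X 0 * X 1 : MvPolynomial (Fin 4) R) +
      h22 • (X 2 * X 2 : MvPolynomial (Fin 4) R) + h33 • (X 3 * X 3 : MvPolynomial (Fin 4) R) +
      (h23 - h22 - h33) • (X 2 * X 3 : MvPolynomial (Fin 4) R)
  rw [hc]
  refine add_mem (add_mem (add_mem ?_ ?_) ?_) ?_ <;>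
    exact Submodule.smul_mem _ _ (Submodule.subset_span (by simp))

theorem finrank_span_X_mul_X (F : Type*) [Field F] :
    Module.finrank F (Submodule.span F
      {X 0 * X 2, X 0 * X 3, X 1 * X 2, X 1 * X 3} : Submodule F (MvPolynomial (Fin 4) F)) = 4 := by
  let e : Fin 4 → Fin 4 →₀ ℕ := ![Finsupp.single 0 1 + Finsupp.single 2 1,
    Finsupp.single 0 1 + Finsupp.single 3 1, Finsupp.single 1 1 + Finsupp.single 2 1,
    Finsupp.single 1 1 + Finsupp.single 3 1]
  have he : Function.Injective e := by
    intro a b hab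
    fin_cases a <;> fin_cases b <;>
      simp_all [e, Finsupp.ext_iff, Fin.forall_fin_succ, Finsupp.single_apply]
  have hmon : basisMonomials (Fin 4) F ∘ e = ![X 0 * X 2, X 0 * X 3, X 1 * X 2, X 1 * X 3] := by
    funext k
    fin_cases k <;> simp [e, coe_basisMonomials, X, monomial_mul]
  have hli := (basisMonomials (Fin 4) F).linearIndependent.comp e he
  rw [hmon] at hli
  have hrange : Set.range ![(X 0 * X 2 : MvPolynomial (Fin 4) F), X 0 * X 3, X 1 * X 2, X 1 * X 3]
      = {X 0 * X 2, X 0 * X 3, X 1 * X 2, X 1 * X 3} := by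
    simp only [Matrix.range_cons, Matrix.range_empty, Set.union_empty, Set.singleton_union]
  rw [← hrange, finrank_span_eq_card hli, Fintype.card_fin]

theorem mem_I2_iff {F : Type*} [Field F] {S : Set (PG3 F)} {f : MvPolynomial (Fin 4) F} :
    f ∈ I2 F S ↔ f.IsHomogeneous 2 ∧ ∀ p ∈ S, eval p.rep f = 0 := by
  simp [I2, Submodule.mem_inf, Submodule.mem_iInf]

def skewLines (F : Type*) [Field F] : Set (PG3 F) :=
  {p | p.rep 2 = 0 ∧ p.rep 3 = 0} ∪ {p | p.rep 0 = 0 ∧ p.rep 1 = 0}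

theorem span_X_mul_X_le_I2_skewLines (F : Type*) [Field F] :
    Submodule.span F {X 0 * X 2, X 0 * X 3, X 1 * X 2, X 1 * X 3} ≤ I2 F (skewLines F) := by
  rw [Submodule.span_le]
  rintro g (rfl | rfl | rfl | rfl) <;>
    refine mem_I2_iff.2 ⟨(isHomogeneous_X F _).mul (isHomogeneous_X F _), ?_⟩ <;>
    rintro p (⟨h2, h3⟩ | ⟨h0, h1⟩) <;> simp [*]

theorem I2_skewLines_le_span_X_mul_X (F : Type*) [Field F] :
    I2 F (skewLines F) ≤ Submodule.span F {X 0 * X 2, X 0 * X 3, X 1 * X 2, X 1 * X 3} := by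
  intro f hf
  obtain ⟨hf, hvanish⟩ := mem_I2_iff.1 hf
  refine mem_span_X_mul_X_of_eval_eq_zero hf (fun v h2 h3 => ?_) (fun v h0 h1 => ?_)
  · refine hf.eval_eq_zero_of_forall_rep two_ne_zero {2, 3} (fun p hp => hvanish p ?_) ?_
    · exact Or.inl ⟨hp 2 (by simp), hp 3 (by simp)⟩
    · simp [h2, h3]
  · refine hf.eval_eq_zero_of_forall_rep two_ne_zero {0, 1} (fun p hp => hvanish p ?_) ?_
    · exact Or.inr ⟨hp 0 (by simp), hp 1 (by simp)⟩
    · simp [h0, h1]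

theorem Vz_I2_skewLines (F : Type*) [Field F] : Vz F (I2 F (skewLines F)) = skewLines F := by
  refine Set.ext fun p => ⟨fun hp => ?_, fun hp f hf => (mem_I2_iff.1 hf).2 p hp⟩
  have h : ∀ g ∈ ({X 0 * X 2, X 0 * X 3, X 1 * X 2, X 1 * X 3} : Set (MvPolynomial (Fin 4) F)),
      eval p.rep g = 0 := fun g hg =>
    hp g (span_X_mul_X_le_I2_skewLines F (Submodule.subset_span hg))
  simp only [Set.mem_insert_iff, Set.mem_singleton_iff, forall_eq_or_imp, forall_eq, eval_mul,
    eval_X, mul_eq_zero] at h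
  simp only [skewLines, Set.mem_union, Set.mem_ofPred_eq]
  tauto

theorem stmt6_general (F : Type*) [Field F]
    (T : Set (PG3 F))
    (hT : T = {p : PG3 F | p.rep 2 = 0 ∧ p.rep 3 = 0} ∪
              {p : PG3 F | p.rep 0 = 0 ∧ p.rep 1 = 0}) :
    I2 F T = Submodule.span F {X 0 * X 2, X 0 * X 3, X 1 * X 2, X 1 * X 3} ∧
    Module.finrank F (I2 F T) = 4 ∧
    Vz F (I2 F T) = T ∧
    rk F T = 6 := by
  obtain rfl : T = skewLines F := hT
  have hI : I2 F (skewLines F) = Submodule.span F {X 0 * X 2, X 0 * X 3, X 1 * X 2, X 1 * X 3} :=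
    le_antisymm (I2_skewLines_le_span_X_mul_X F) (span_X_mul_X_le_I2_skewLines F)
  have hrank : Module.finrank F (I2 F (skewLines F)) = 4 := hI ▸ finrank_span_X_mul_X F
  exact ⟨hI, hrank, Vz_I2_skewLines F, by rw [rk, hrank]⟩

theorem stmt6 (F : Type*) [Field F] [Fintype F]
    (T : Set (PG3 F))
    (hT : T = {p : PG3 F | p.rep 2 = 0 ∧ p.rep 3 = 0} ∪
              {p : PG3 F | p.rep 0 = 0 ∧ p.rep 1 = 0}) :
    I2 F T = Submodule.span F {X 0 * X 2, X 0 * X 3, X 1 * X 2, X 1 * X 3} ∧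
    Module.finrank F (I2 F T) = 4 ∧
    Vz F (I2 F T) = T ∧
    rk F T = 6 :=
  stmt6_general F T hT
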